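/- For a concise tensor T ∈ A⊗B⊗C, the set of triples (X,Y,Z) ∈ End(A)×End(B)×End(C) compatible with T (the 111-algebra of T) is a commutative unital subalgebra of End(A)×End(B)×End(C), and the projection of this set to each of the three factors End(A), End(B), End(C) is injective. -/
import Mathlib


open TensorProduct

noncomputable section

namespace Paper

variable {A B C : Type*} [AddCommGroup A] [Module ℂ A]
  [AddCommGroup B] [Module ℂ B] [AddCommGroup C] [Module ℂ C]

/-- Action of `X ∈ End(A)` on the `A`-factor: `X ∘_A T = (X ⊗ Id_B ⊗ Id_C)(T)`. -/
def actA (X : Module.End ℂ A) : A ⊗[ℂ] (B ⊗[ℂ] C) →ₗ[ℂ] A ⊗[ℂ] (B ⊗[ℂ] C) :=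
  TensorProduct.map X LinearMap.id

/-- Action of `Y ∈ End(B)` on the `B`-factor. -/
def actB (Y : Module.End ℂ B) : A ⊗[ℂ] (B ⊗[ℂ] C) →ₗ[ℂ] A ⊗[ℂ] (B ⊗[ℂ] C) :=
  TensorProduct.map LinearMap.id (TensorProduct.map Y LinearMap.id)

/-- Action of `Z ∈ End(C)` on the `C`-factor. -/
def actC (Z : Module.End ℂ C) : A ⊗[ℂ] (B ⊗[ℂ] C) →ₗ[ℂ] A ⊗[ℂ] (B ⊗[ℂ] C) :=
  TensorProduct.map LinearMap.id (TensorProduct.map LinearMap.id Z)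

/-- Contraction of the `A`-factor against `α ∈ A*`: `T ↦ T(α) ∈ B ⊗ C`. -/
def contrA (α : Module.Dual ℂ A) : A ⊗[ℂ] (B ⊗[ℂ] C) →ₗ[ℂ] B ⊗[ℂ] C :=
  (TensorProduct.lid ℂ (B ⊗[ℂ] C)).toLinearMap ∘ₗ TensorProduct.map α LinearMap.id

/-- Contraction of the `B`-factor against `β ∈ B*`: `T ↦ T(β) ∈ A ⊗ C`. -/
def contrB (β : Module.Dual ℂ B) : A ⊗[ℂ] (B ⊗[ℂ] C) →ₗ[ℂ] A ⊗[ℂ] C :=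
  TensorProduct.map LinearMap.id
    ((TensorProduct.lid ℂ C).toLinearMap ∘ₗ TensorProduct.map β LinearMap.id)

/-- Contraction of the `C`-factor against `γ ∈ C*`: `T ↦ T(γ) ∈ A ⊗ B`. -/
def contrC (γ : Module.Dual ℂ C) : A ⊗[ℂ] (B ⊗[ℂ] C) →ₗ[ℂ] A ⊗[ℂ] B :=
  TensorProduct.map LinearMap.id
    ((TensorProduct.rid ℂ B).toLinearMap ∘ₗ TensorProduct.map LinearMap.id γ)

/-- A tensor is concise if all three flattening maps are injective. -/
def Concise (T : A ⊗[ℂ] (B ⊗[ℂ] C)) : Prop :=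
  Function.Injective (fun α : Module.Dual ℂ A => contrA α T) ∧
  Function.Injective (fun β : Module.Dual ℂ B => contrB β T) ∧
  Function.Injective (fun γ : Module.Dual ℂ C => contrC γ T)

/-- View an element of `M ⊗ N` as a linear map `M* → N`. -/
def toHom {M N : Type*} [AddCommGroup M] [Module ℂ M] [AddCommGroup N] [Module ℂ N] :
    M ⊗[ℂ] N →ₗ[ℂ] (Module.Dual ℂ M →ₗ[ℂ] N) :=
  (dualTensorHom ℂ (Module.Dual ℂ M) N).comp
    (TensorProduct.map (Module.Dual.eval ℂ M) LinearMap.id)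

/-- A triple `(X,Y,Z)` is compatible with `T` if `X∘_A T = Y∘_B T = Z∘_C T`. -/
def Compat (T : A ⊗[ℂ] (B ⊗[ℂ] C))
    (p : Module.End ℂ A × Module.End ℂ B × Module.End ℂ C) : Prop :=
  actA p.1 T = actB p.2.1 T ∧ actB p.2.1 T = actC p.2.2 T

/-- The subspace `T(A*) ⊗ A ⊆ A ⊗ B ⊗ C`. -/
def spanA (T : A ⊗[ℂ] (B ⊗[ℂ] C)) : Submodule ℂ (A ⊗[ℂ] (B ⊗[ℂ] C)) :=
  Submodule.span ℂ {x | ∃ (a : A) (α : Module.Dual ℂ A), x = a ⊗ₜ[ℂ] contrA α T}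

/-- The subspace `T(B*) ⊗ B ⊆ A ⊗ B ⊗ C` (factors in the correct positions). -/
def spanB (T : A ⊗[ℂ] (B ⊗[ℂ] C)) : Submodule ℂ (A ⊗[ℂ] (B ⊗[ℂ] C)) :=
  Submodule.span ℂ {x | ∃ (b : B) (β : Module.Dual ℂ B),
    x = (TensorProduct.leftComm ℂ B A C) (b ⊗ₜ[ℂ] contrB β T)}

/-- The subspace `T(C*) ⊗ C ⊆ A ⊗ B ⊗ C` (factors in the correct positions). -/
def spanC (T : A ⊗[ℂ] (B ⊗[ℂ] C)) : Submodule ℂ (A ⊗[ℂ] (B ⊗[ℂ] C)) :=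
  Submodule.span ℂ {x | ∃ (c : C) (γ : Module.Dual ℂ C),
    x = (TensorProduct.congr (LinearEquiv.refl ℂ A) (TensorProduct.comm ℂ C B))
      ((TensorProduct.leftComm ℂ C A B) (c ⊗ₜ[ℂ] contrC γ T))}

/-- The triple intersection `(T(A*)⊗A) ∩ (T(B*)⊗B) ∩ (T(C*)⊗C)`. -/
def tripleInt (T : A ⊗[ℂ] (B ⊗[ℂ] C)) : Submodule ℂ (A ⊗[ℂ] (B ⊗[ℂ] C)) :=
  spanA T ⊓ spanB T ⊓ spanC T

end Paper


section Aux

open Paper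

variable {A B C : Type*} [AddCommGroup A] [Module ℂ A]
  [AddCommGroup B] [Module ℂ B] [AddCommGroup C] [Module ℂ C]

lemma actA_comp_actB (X : Module.End ℂ A) (Y : Module.End ℂ B)
    (t : A ⊗[ℂ] (B ⊗[ℂ] C)) : actA X (actB Y t) = actB Y (actA X t) := by
  have h : (actA X ∘ₗ actB Y : A ⊗[ℂ] (B ⊗[ℂ] C) →ₗ[ℂ] _) = actB Y ∘ₗ actA X := by
    simp only [actA, actB, ← TensorProduct.map_comp, LinearMap.comp_id, LinearMap.id_comp]
  exact congrArg (fun f => f t) h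

lemma actA_comp_actC (X : Module.End ℂ A) (Z : Module.End ℂ C)
    (t : A ⊗[ℂ] (B ⊗[ℂ] C)) : actA X (actC Z t) = actC Z (actA X t) := by
  have h : (actA X ∘ₗ actC Z : A ⊗[ℂ] (B ⊗[ℂ] C) →ₗ[ℂ] _) = actC Z ∘ₗ actA X := by
    simp only [actA, actC, ← TensorProduct.map_comp, LinearMap.comp_id, LinearMap.id_comp]
  exact congrArg (fun f => f t) h

lemma actB_comp_actC (Y : Module.End ℂ B) (Z : Module.End ℂ C)
    (t : A ⊗[ℂ] (B ⊗[ℂ] C)) : actB Y (actC Z t) = actC Z (actB Y t) := by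
  have h : (actB Y ∘ₗ actC Z : A ⊗[ℂ] (B ⊗[ℂ] C) →ₗ[ℂ] _) = actC Z ∘ₗ actB Y := by
    simp only [actB, actC, ← TensorProduct.map_comp, LinearMap.comp_id, LinearMap.id_comp]
  exact congrArg (fun f => f t) h

lemma actA_mul (X X' : Module.End ℂ A) (t : A ⊗[ℂ] (B ⊗[ℂ] C)) :
    actA (X * X') t = actA X (actA X' t) := by
  have h : (actA (X * X') : A ⊗[ℂ] (B ⊗[ℂ] C) →ₗ[ℂ] _) = actA X ∘ₗ actA X' := by
    simp only [actA, ← TensorProduct.map_comp, LinearMap.comp_id, Module.End.mul_eq_comp]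
  exact congrArg (fun f => f t) h

lemma actB_mul (Y Y' : Module.End ℂ B) (t : A ⊗[ℂ] (B ⊗[ℂ] C)) :
    actB (Y * Y') t = actB Y (actB Y' t) := by
  have h : (actB (Y * Y') : A ⊗[ℂ] (B ⊗[ℂ] C) →ₗ[ℂ] _) = actB Y ∘ₗ actB Y' := by
    simp only [actB, ← TensorProduct.map_comp, LinearMap.comp_id, LinearMap.id_comp,
      Module.End.mul_eq_comp]
  exact congrArg (fun f => f t) h

lemma actC_mul (Z Z' : Module.End ℂ C) (t : A ⊗[ℂ] (B ⊗[ℂ] C)) :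
    actC (Z * Z') t = actC Z (actC Z' t) := by
  have h : (actC (Z * Z') : A ⊗[ℂ] (B ⊗[ℂ] C) →ₗ[ℂ] _) = actC Z ∘ₗ actC Z' := by
    simp only [actC, ← TensorProduct.map_comp, LinearMap.comp_id, LinearMap.id_comp,
      Module.End.mul_eq_comp]
  exact congrArg (fun f => f t) h

lemma contrA_actA (α : Module.Dual ℂ A) (X : Module.End ℂ A) (t : A ⊗[ℂ] (B ⊗[ℂ] C)) :
    contrA (B := B) (C := C) α (actA X t) = contrA (α ∘ₗ X) t := by
  have h : (contrA α ∘ₗ actA X : A ⊗[ℂ] (B ⊗[ℂ] C) →ₗ[ℂ] _) = contrA (α ∘ₗ X) := by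
    simp only [contrA, actA, LinearMap.comp_assoc, ← TensorProduct.map_comp,
      LinearMap.comp_id, LinearMap.id_comp]
  exact congrArg (fun f => f t) h

lemma contrB_actB (β : Module.Dual ℂ B) (Y : Module.End ℂ B) (t : A ⊗[ℂ] (B ⊗[ℂ] C)) :
    contrB (A := A) (C := C) β (actB Y t) = contrB (β ∘ₗ Y) t := by
  have h : (contrB β ∘ₗ actB Y : A ⊗[ℂ] (B ⊗[ℂ] C) →ₗ[ℂ] _) = contrB (β ∘ₗ Y) := by
    simp only [contrB, actB, ← TensorProduct.map_comp, LinearMap.comp_id, LinearMap.id_comp,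
      LinearMap.comp_assoc]
  exact congrArg (fun f => f t) h

lemma contrC_actC (γ : Module.Dual ℂ C) (Z : Module.End ℂ C) (t : A ⊗[ℂ] (B ⊗[ℂ] C)) :
    contrC (A := A) (B := B) γ (actC Z t) = contrC (γ ∘ₗ Z) t := by
  have h : (contrC γ ∘ₗ actC Z : A ⊗[ℂ] (B ⊗[ℂ] C) →ₗ[ℂ] _) = contrC (γ ∘ₗ Z) := by
    simp only [contrC, actC, ← TensorProduct.map_comp, LinearMap.comp_id, LinearMap.id_comp,
      LinearMap.comp_assoc]
  exact congrArg (fun f => f t) h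

lemma end_eq_of_dual {M : Type*} [AddCommGroup M] [Module ℂ M] {X X' : Module.End ℂ M}
    (h : ∀ φ : Module.Dual ℂ M, φ ∘ₗ X = φ ∘ₗ X') : X = X' := by
  ext a
  rw [← sub_eq_zero]
  rw [← Module.forall_dual_apply_eq_zero_iff ℂ (X a - X' a)]
  intro φ
  have := congrArg (fun f => f a) (h φ)
  simp only [LinearMap.comp_apply] at this
  simp [this]

lemma injA {T : A ⊗[ℂ] (B ⊗[ℂ] C)} (hT : Concise T) {X X' : Module.End ℂ A}
    (h : actA X T = actA X' T) : X = X' := by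
  refine end_eq_of_dual fun α => hT.1 ?_
  show contrA (α ∘ₗ X) T = contrA (α ∘ₗ X') T
  rw [← contrA_actA, h, contrA_actA]

lemma injB {T : A ⊗[ℂ] (B ⊗[ℂ] C)} (hT : Concise T) {Y Y' : Module.End ℂ B}
    (h : actB Y T = actB Y' T) : Y = Y' := by
  refine end_eq_of_dual fun β => hT.2.1 ?_
  show contrB (β ∘ₗ Y) T = contrB (β ∘ₗ Y') T
  rw [← contrB_actB, h, contrB_actB]

lemma injC {T : A ⊗[ℂ] (B ⊗[ℂ] C)} (hT : Concise T) {Z Z' : Module.End ℂ C}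
    (h : actC Z T = actC Z' T) : Z = Z' := by
  refine end_eq_of_dual fun γ => hT.2.2 ?_
  show contrC (γ ∘ₗ Z) T = contrC (γ ∘ₗ Z') T
  rw [← contrC_actC, h, contrC_actC]

lemma actA_add (X X' : Module.End ℂ A) (t : A ⊗[ℂ] (B ⊗[ℂ] C)) :
    actA (B := B) (C := C) (X + X') t = actA X t + actA X' t := by
  simp [actA, TensorProduct.map_add_left]

lemma actB_add (Y Y' : Module.End ℂ B) (t : A ⊗[ℂ] (B ⊗[ℂ] C)) :
    actB (A := A) (C := C) (Y + Y') t = actB Y t + actB Y' t := by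
  simp [actB, TensorProduct.map_add_left, TensorProduct.map_add_right]

lemma actC_add (Z Z' : Module.End ℂ C) (t : A ⊗[ℂ] (B ⊗[ℂ] C)) :
    actC (A := A) (B := B) (Z + Z') t = actC Z t + actC Z' t := by
  simp [actC, TensorProduct.map_add_right]

lemma actA_smul (c : ℂ) (X : Module.End ℂ A) (t : A ⊗[ℂ] (B ⊗[ℂ] C)) :
    actA (B := B) (C := C) (c • X) t = c • actA X t := by
  simp [actA, TensorProduct.map_smul_left]

lemma actB_smul (c : ℂ) (Y : Module.End ℂ B) (t : A ⊗[ℂ] (B ⊗[ℂ] C)) :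
    actB (A := A) (C := C) (c • Y) t = c • actB Y t := by
  simp [actB, TensorProduct.map_smul_left, TensorProduct.map_smul_right]

lemma actC_smul (c : ℂ) (Z : Module.End ℂ C) (t : A ⊗[ℂ] (B ⊗[ℂ] C)) :
    actC (A := A) (B := B) (c • Z) t = c • actC Z t := by
  simp [actC, TensorProduct.map_smul_right]

lemma actA_one (t : A ⊗[ℂ] (B ⊗[ℂ] C)) : actA (B := B) (C := C) 1 t = t := by
  simp [actA, Module.End.one_eq_id, TensorProduct.map_id]

lemma actB_one (t : A ⊗[ℂ] (B ⊗[ℂ] C)) : actB (A := A) (C := C) 1 t = t := by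
  simp [actB, Module.End.one_eq_id, TensorProduct.map_id]

lemma actC_one (t : A ⊗[ℂ] (B ⊗[ℂ] C)) : actC (A := A) (B := B) 1 t = t := by
  simp [actC, Module.End.one_eq_id, TensorProduct.map_id]

lemma compat_mul_aux {T : A ⊗[ℂ] (B ⊗[ℂ] C)}
    {p q : Module.End ℂ A × Module.End ℂ B × Module.End ℂ C}
    (hp : Compat T p) (hq : Compat T q) :
    actA (p.1 * q.1) T = actB (p.2.1 * q.2.1) T ∧
    actA (p.1 * q.1) T = actC (p.2.2 * q.2.2) T ∧
    actA (p.1 * q.1) T = actB (q.2.1 * p.2.1) T ∧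
    actA (p.1 * q.1) T = actC (q.2.2 * p.2.2) T := by
  obtain ⟨hp1, hp2⟩ := hp
  obtain ⟨hq1, hq2⟩ := hq
  refine ⟨?_, ?_, ?_, ?_⟩
  · rw [actA_mul, hq1.trans hq2, actA_comp_actC, hp1, ← actB_comp_actC, ← hq2, ← actB_mul]
  · rw [actA_mul, hq1, actA_comp_actB, hp1.trans hp2, actB_comp_actC, hq2, ← actC_mul]
  · rw [actA_mul, hq1, actA_comp_actB, hp1, ← actB_mul]
  · rw [actA_mul, hq1.trans hq2, actA_comp_actC, hp1.trans hp2, ← actC_mul]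

end Aux

open Paper in
/-- the 111-algebra of a concise tensor is a commutative unital subalgebra
of `End(A) × End(B) × End(C)` and its projection to each factor is injective. -/
theorem stmt6 {A B C : Type*} [AddCommGroup A] [Module ℂ A] [AddCommGroup B] [Module ℂ B]
    [AddCommGroup C] [Module ℂ C] [FiniteDimensional ℂ A] [FiniteDimensional ℂ B]
    [FiniteDimensional ℂ C] (T : A ⊗[ℂ] (B ⊗[ℂ] C)) (hT : Concise T) :
    Compat T 1 ∧
    (∀ c : ℂ, Compat T (algebraMap ℂ (Module.End ℂ A × Module.End ℂ B × Module.End ℂ C) c)) ∧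
    (∀ p q, Compat T p → Compat T q → Compat T (p + q)) ∧
    (∀ (c : ℂ) p, Compat T p → Compat T (c • p)) ∧
    (∀ p q, Compat T p → Compat T q → Compat T (p * q)) ∧
    (∀ p q, Compat T p → Compat T q → p * q = q * p) ∧
    (∀ p q, Compat T p → Compat T q → p.1 = q.1 → p = q) ∧
    (∀ p q, Compat T p → Compat T q → p.2.1 = q.2.1 → p = q) ∧
    (∀ p q, Compat T p → Compat T q → p.2.2 = q.2.2 → p = q) := by
  have unit : Compat T 1 := by
    refine ⟨?_, ?_⟩
    · show actA 1 T = actB 1 T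
      rw [actA_one, actB_one]
    · show actB 1 T = actC 1 T
      rw [actB_one, actC_one]
  have add : ∀ p q, Compat T p → Compat T q → Compat T (p + q) := by
    intro p q hp hq
    constructor
    · show actA (p.1 + q.1) T = actB (p.2.1 + q.2.1) T
      rw [actA_add, actB_add, hp.1, hq.1]
    · show actB (p.2.1 + q.2.1) T = actC (p.2.2 + q.2.2) T
      rw [actB_add, actC_add, hp.2, hq.2]
  have smul : ∀ (c : ℂ) p, Compat T p → Compat T (c • p) := by
    intro c p hp
    constructor
    · show actA (c • p.1) T = actB (c • p.2.1) T
      rw [actA_smul, actB_smul, hp.1]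
    · show actB (c • p.2.1) T = actC (c • p.2.2) T
      rw [actB_smul, actC_smul, hp.2]
  have mul : ∀ p q, Compat T p → Compat T q → Compat T (p * q) := by
    intro p q hp hq
    obtain ⟨h1, h2, _, _⟩ := compat_mul_aux hp hq
    exact ⟨h1.symm.trans h2 ▸ h1, h1.symm.trans h2⟩
  refine ⟨unit, ?_, add, smul, mul, ?_, ?_, ?_, ?_⟩
  · intro c
    have : algebraMap ℂ (Module.End ℂ A × Module.End ℂ B × Module.End ℂ C) c = c • 1 :=
      Algebra.algebraMap_eq_smul_one c
    rw [this]
    exact smul c 1 unit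
  · intro p q hp hq
    obtain ⟨h1, h2, h3, h4⟩ := compat_mul_aux hp hq
    obtain ⟨h1', h2', h3', h4'⟩ := compat_mul_aux hq hp
    have hB : p.2.1 * q.2.1 = q.2.1 * p.2.1 := injB hT (h1.symm.trans h3)
    have hC : p.2.2 * q.2.2 = q.2.2 * p.2.2 := injC hT (h2.symm.trans h4)
    have hA : p.1 * q.1 = q.1 * p.1 := injA hT (h3.trans h1'.symm)
    exact Prod.ext hA (Prod.ext hB hC)
  · intro p q hp hq h
    have hB : p.2.1 = q.2.1 := injB hT (hp.1.symm.trans (h ▸ hq.1))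
    have hC : p.2.2 = q.2.2 := injC hT (hp.2.symm.trans (hB ▸ hq.2))
    exact Prod.ext h (Prod.ext hB hC)
  · intro p q hp hq h
    have hA : p.1 = q.1 := injA hT (hp.1.trans (h ▸ hq.1.symm))
    have hC : p.2.2 = q.2.2 := injC hT (hp.2.symm.trans (h ▸ hq.2))
    exact Prod.ext hA (Prod.ext h hC)
  · intro p q hp hq h
    have hB : p.2.1 = q.2.1 := injB hT (hp.2.trans (h ▸ hq.2.symm))
    have hA : p.1 = q.1 := injA hT (hp.1.trans (hB ▸ hq.1.symm))
    exact Prod.ext hA (Prod.ext hB h)
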